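/- Let T_A = Aℤⁿ/qℤⁿ be a discrete weighted torus satisfying the distance condition. Then the total scalar curvature is non-positive: Σ_{[x]∈T_A} R([x]) ≤ 0. -/

import Mathlib

open Filter Topology

noncomputable section

namespace PMT

/-- The `i`-th standard unit vector in `ℤⁿ`. -/
def e (n : ℕ) (i : Fin n) : Fin n → ℤ := fun j => if j = i then 1 else 0

/-- The grid graph on `ℤⁿ`: `x ∼ y` iff `‖x − y‖₁ = 1`. -/
def grid (n : ℕ) : SimpleGraph (Fin n → ℤ) where
  Adj x y := (∑ i, |x i - y i|) = 1
  symm := by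
    refine ⟨?_⟩
    intro x y h
    try beta_reduce at h ⊢
    have h' : ∀ i ∈ Finset.univ, |y i - x i| = |x i - y i| :=
      fun i _ => abs_sub_comm _ _
    rw [Finset.sum_congr rfl h']
    exact h
  loopless := by refine ⟨?_⟩; intro x h; simp at h

/-- The graph Laplacian `Δf(x) = Σ_{y∼x} w(x,y)(f(y)−f(x))` of an integer-valued function. -/
def lap {V : Type*} (G : SimpleGraph V) (w : V → V → ℝ) (f : V → ℤ) (x : V) : ℝ :=
  ∑ᶠ y ∈ {y | G.Adj x y}, w x y * ((f y : ℝ) - (f x : ℝ))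

/-- `f : V → ℤ` is 1-Lipschitz with respect to the combinatorial graph distance. -/
def Lip1 {V : Type*} (G : SimpleGraph V) (f : V → ℤ) : Prop :=
  ∀ x y, |f x - f y| ≤ (G.dist x y : ℤ)

/-- Ollivier curvature of the pair `(x, y)`:
`κ(x,y) = inf {Δf(x) − Δf(y) | f : V → ℤ, f 1-Lipschitz, f(y) = f(x) + 1}`. -/
def kappa {V : Type*} (G : SimpleGraph V) (w : V → V → ℝ) (x y : V) : ℝ :=
  sInf {r | ∃ f : V → ℤ, Lip1 G f ∧ f y = f x + 1 ∧ r = lap G w f x - lap G w f y}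

/-- Scalar curvature `R(x) = Σ_{y∼x} κ(x,y)`. -/
def scal {V : Type*} (G : SimpleGraph V) (w : V → V → ℝ) (x : V) : ℝ :=
  ∑ᶠ y ∈ {y | G.Adj x y}, kappa G w x y

/-- A weighted grid graph `(ℤⁿ, w)`: symmetric weights, positive on edges. -/
structure GridWeight (n : ℕ) where
  w : (Fin n → ℤ) → (Fin n → ℤ) → ℝ
  symm : ∀ x y, w x y = w y x
  pos : ∀ x y, (grid n).Adj x y → 0 < w x y

/-- The quantity `Abs(x)` measuring the distortion from the standard grid graph. -/
def Absf (n : ℕ) (w : (Fin n → ℤ) → (Fin n → ℤ) → ℝ) (x : Fin n → ℤ) : ℝ :=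
  ∑ i, ∑ j, if i ≠ j then
      (|w x (x + e n i) - w (x + e n j) (x + e n j + e n i)| +
       |w x (x + e n i) - w (x - e n j) (x - e n j + e n i)| +
       |w x (x - e n i) - w (x + e n j) (x + e n j - e n i)| +
       |w x (x - e n i) - w (x - e n j) (x - e n j - e n i)|)
    else 0

/-- The `ℓ^∞` norm `‖x‖_∞` of `x ∈ ℤⁿ`, as a natural number. -/
def nInf {n : ℕ} (x : Fin n → ℤ) : ℕ := Finset.univ.sup fun i => (x i).natAbs

/-- The cube `Q_r = {y ∈ ℤⁿ : ‖y‖∞ ≤ r}` as a finset. -/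
def Qr (n r : ℕ) : Finset (Fin n → ℤ) := Finset.Icc (fun _ => -(r : ℤ)) (fun _ => (r : ℤ))

/-- `Σ_{e ∈ E_r} w(e)`: the sum of weights of edges with exactly one endpoint in `Q_r`
(each such edge is counted once, via its endpoint inside `Q_r`). -/
def ErSum (n : ℕ) (w : (Fin n → ℤ) → (Fin n → ℤ) → ℝ) (r : ℕ) : ℝ :=
  ∑ x ∈ Qr n r, ∑ i,
    ((if x + e n i ∉ Qr n r then w x (x + e n i) else 0) +
     (if x - e n i ∉ Qr n r then w x (x - e n i) else 0))

/-- `Σ_{τ ∈ Ẽ_r} w(τ)`: the sum of weights of edges joining the sphere `S_{r+1}` to the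
sphere `S_{r+2}` (each such edge is counted once, via its endpoint in `S_{r+1}`). -/
def TErSum (n : ℕ) (w : (Fin n → ℤ) → (Fin n → ℤ) → ℝ) (r : ℕ) : ℝ :=
  ∑ x ∈ Qr n (r + 1), if nInf x = r + 1 then
      (∑ i, ((if nInf (x + e n i) = r + 2 then w x (x + e n i) else 0) +
             (if nInf (x - e n i) = r + 2 then w x (x - e n i) else 0)))
    else 0

/-- The weighted grid graph `(ℤⁿ, w)` is asymptotically flat: there is `p > n` with
`w = 1 + o(1)`, `Abs(x) = O(‖x‖∞^{−p})` and `|R(x)| = O(‖x‖∞^{−p})` as `‖x‖∞ → ∞`. -/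
def AsympFlatGrid (n : ℕ) (W : GridWeight n) : Prop :=
  ∃ p : ℝ, (n : ℝ) < p ∧
    (∀ ε : ℝ, 0 < ε → ∃ M : ℕ, ∀ x y, (grid n).Adj x y → M ≤ nInf x → |W.w x y - 1| ≤ ε) ∧
    (∃ C : ℝ, ∃ M : ℕ, 0 < M ∧ ∀ x, M ≤ nInf x → Absf n W.w x ≤ C * (nInf x : ℝ) ^ (-p)) ∧
    (∃ C : ℝ, ∃ M : ℕ, 0 < M ∧ ∀ x, M ≤ nInf x → |scal (grid n) W.w x| ≤ C * (nInf x : ℝ) ^ (-p))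


/-- The data of a discrete torus `T_A = Aℤⁿ/qℤⁿ`: an integer matrix `A` with
`det A ≠ 0`, and `q = k·|det A|` for some `k ∈ ℤ₊`. We parametrize the lattice `Aℤⁿ` by
`ℤⁿ` via `z ↦ Az` (so the vertex `x = Az` corresponds to `z`, and `α_i = A e_i`
corresponds to `e_i`). -/
structure TorusData (n : ℕ) where
  A : Matrix (Fin n) (Fin n) ℤ
  hdet : A.det ≠ 0
  k : ℕ
  hk : 0 < k

/-- `q = k·|det A|`. -/
def TorusData.q {n : ℕ} (T : TorusData n) : ℕ := T.k * T.A.det.natAbs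

/-- The subgroup `{z ∈ ℤⁿ | Az ∈ qℤⁿ}` of `ℤⁿ`; under `z ↦ Az` it corresponds to the
sublattice `qℤⁿ ⊆ Aℤⁿ`. -/
def TorusData.lat {n : ℕ} (T : TorusData n) : AddSubgroup (Fin n → ℤ) where
  carrier := {z | ∀ j, ((T.q : ℤ)) ∣ T.A.mulVec z j}
  zero_mem' := by intro j; simp [Matrix.mulVec_zero]
  add_mem' := by
    intro a b ha hb j
    rw [Matrix.mulVec_add]
    exact dvd_add (ha j) (hb j)
  neg_mem' := by
    intro a ha j
    rw [Matrix.mulVec_neg]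
    exact dvd_neg.mpr (ha j)

/-- The vertex set of the discrete torus `T_A = Aℤⁿ/qℤⁿ` (in the `z`-parametrization). -/
def TorusV {n : ℕ} (T : TorusData n) : Type := (Fin n → ℤ) ⧸ T.lat

instance {n : ℕ} (T : TorusData n) : AddCommGroup (TorusV T) :=
  QuotientAddGroup.Quotient.addCommGroup T.lat

/-- The quotient map `Aℤⁿ → T_A` (in the `z`-parametrization, `z` stands for `x = Az`). -/
def tmk {n : ℕ} (T : TorusData n) (z : Fin n → ℤ) : TorusV T := QuotientAddGroup.mk z

/-- The graph structure of the discrete torus: `[x] ∼ [y]` iff `x − y ∈ qℤⁿ ± α_i`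
for some `i` (and `[x] ≠ [y]`, so that the graph is simple). -/
def torusG {n : ℕ} (T : TorusData n) : SimpleGraph (TorusV T) where
  Adj a b := a ≠ b ∧ ∃ i : Fin n, b - a = tmk T (e n i) ∨ a - b = tmk T (e n i)
  symm := by
    refine ⟨?_⟩
    rintro a b ⟨hne, i, h | h⟩
    · exact ⟨hne.symm, i, Or.inr h⟩
    · exact ⟨hne.symm, i, Or.inl h⟩
  loopless := by refine ⟨?_⟩; rintro a ⟨hne, -⟩; exact hne rfl

/-- The distance condition: every combinatorial ball of radius 2 in the lattice `Aℤⁿ`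
embeds isometrically into the torus, i.e. `d(u,v) = d([u],[v])` for all `u, v ∈ B₂(x)`. -/
def DistCond {n : ℕ} (T : TorusData n) : Prop :=
  ∀ x u v : Fin n → ℤ, (grid n).dist x u ≤ 2 → (grid n).dist x v ≤ 2 →
    (grid n).dist u v = (torusG T).dist (tmk T u) (tmk T v)

/-!
Under the distance condition every vertex `a` of the torus has exactly the `2n` neighbours
`a ± [e_i]`, and, for `[x] = a`, the ball `[x + B₂(0)]` is isometric to `B₂(0) ⊂ ℤⁿ`, so the
McShane extension of the `i`-th coordinate from that ball is a 1-Lipschitz function on the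
torus. Testing `κ(a, a + [e_i])` with it and `κ(a, a - [e_i])` with its negative gives
`κ(a, a + [e_i]) + κ(a, a - [e_i]) ≤ D_i(a - [e_i]) - D_i(a + [e_i])`, where
`D_i(b) = w(b, b + [e_i]) - w(b, b - [e_i])` is the Laplacian of the coordinate near `a`.
Summed over the finite group `T_A`, the two translates of `D_i` cancel.
-/

section Graph

variable {V : Type*} {G : SimpleGraph V}

lemma exists_dist_le_of_dist_le_add {u v : V} {m k : ℕ} (huv : G.Reachable u v)
    (h : G.dist u v ≤ m + k) : ∃ x, G.dist u x ≤ m ∧ G.dist x v ≤ k := by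
  obtain ⟨p, hp⟩ := huv.exists_walk_length_eq_dist
  refine ⟨p.getVert m, (SimpleGraph.dist_le (p.take m)).trans ?_,
    (SimpleGraph.dist_le (p.drop m)).trans ?_⟩
  · simp
  · simp only [SimpleGraph.Walk.drop_length]
    omega

lemma Lip1.neg {f : V → ℤ} (hf : Lip1 G f) : Lip1 G (-f) := fun x y => by
  simpa only [Pi.neg_apply, neg_sub_neg, abs_sub_comm] using hf x y

lemma lap_neg [Finite V] (w : V → V → ℝ) (f : V → ℤ) (x : V) :
    lap G w (-f) x = -lap G w f x := by
  rw [lap, lap, ← finsum_mem_neg_distrib _ (Set.toFinite _)]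
  refine finsum_mem_congr rfl fun y _ => ?_
  simp only [Pi.neg_apply, Int.cast_neg]
  ring

lemma abs_lap_le [Finite V] (w : V → V → ℝ) {f : V → ℤ} (hf : Lip1 G f) (x : V) :
    |lap G w f x| ≤ ∑ᶠ y ∈ {y | G.Adj x y}, |w x y| := by
  have hfin := Set.toFinite {y | G.Adj x y}
  rw [lap, finsum_mem_eq_finite_toFinset_sum _ hfin, finsum_mem_eq_finite_toFinset_sum _ hfin]
  refine (Finset.abs_sum_le_sum_abs _ _).trans (Finset.sum_le_sum fun y hy => ?_)
  have hxy : G.Adj x y := by simpa using hy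
  have hstep : |f y - f x| ≤ 1 := by
    simpa [SimpleGraph.dist_eq_one_iff_adj.mpr hxy.symm] using hf y x
  rw [abs_mul]
  refine mul_le_of_le_one_right (abs_nonneg _) ?_
  exact_mod_cast hstep

lemma kappa_le_lap_sub_lap [Finite V] (w : V → V → ℝ) {f : V → ℤ} (hf : Lip1 G f)
    {x y : V} (hxy : f y = f x + 1) : kappa G w x y ≤ lap G w f x - lap G w f y := by
  refine csInf_le
    ⟨-((∑ᶠ z ∈ {z | G.Adj x z}, |w x z|) + ∑ᶠ z ∈ {z | G.Adj y z}, |w y z|), ?_⟩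
    ⟨f, hf, hxy, rfl⟩
  rintro r ⟨g, hg, -, rfl⟩
  have hx := (abs_le.mp (abs_lap_le w hg x)).1
  have hy := (abs_le.mp (abs_lap_le w hg y)).2
  linarith

def mcShane {ι : Type*} (G : SimpleGraph V) (I : Finset ι) (hI : I.Nonempty) (φ : ι → V)
    (g : ι → ℤ) (c : V) : ℤ :=
  I.sup' hI fun j => g j - G.dist c (φ j)

variable {ι : Type*} {I : Finset ι} {hI : I.Nonempty} {φ : ι → V} {g : ι → ℤ}

lemma lip1_mcShane (hG : G.Connected) : Lip1 G (mcShane G I hI φ g) := by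
  have key : ∀ c c', mcShane G I hI φ g c - mcShane G I hI φ g c' ≤ G.dist c c' := by
    intro c c'
    obtain ⟨j, hj, hc⟩ := Finset.exists_mem_eq_sup' hI fun j => g j - G.dist c (φ j)
    have hc' : g j - G.dist c' (φ j) ≤ mcShane G I hI φ g c' :=
      Finset.le_sup' (fun j => g j - (G.dist c' (φ j) : ℤ)) hj
    have htri : G.dist c' (φ j) ≤ G.dist c c' + G.dist c (φ j) :=
      hG.dist_triangle.trans_eq (by rw [SimpleGraph.dist_comm])
    rw [mcShane, hc]
    omega
  intro c c'
  rw [abs_sub_le_iff]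
  exact ⟨key c c', SimpleGraph.dist_comm (u := c) ▸ key c' c⟩

lemma mcShane_apply_of_mem {k : ι} (hk : k ∈ I)
    (hg : ∀ j ∈ I, g j - g k ≤ G.dist (φ k) (φ j)) : mcShane G I hI φ g (φ k) = g k := by
  refine le_antisymm (Finset.sup'_le _ _ fun j hj => by linarith [hg j hj]) ?_
  have h := Finset.le_sup' (fun j => g j - (G.dist (φ k) (φ j) : ℤ)) hk
  rwa [SimpleGraph.dist_self, Nat.cast_zero, sub_zero] at h

end Graph

section Grid

variable {n : ℕ}

def l1 (u : Fin n → ℤ) : ℕ := ∑ i, (u i).natAbs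

@[simp] lemma l1_zero : l1 (0 : Fin n → ℤ) = 0 := by simp [l1]

lemma l1_eq_zero {u : Fin n → ℤ} : l1 u = 0 ↔ u = 0 := by
  simp [l1, Finset.sum_eq_zero_iff, funext_iff]

@[simp] lemma l1_neg (u : Fin n → ℤ) : l1 (-u) = l1 u := by simp [l1]

lemma l1_add_le (u v : Fin n → ℤ) : l1 (u + v) ≤ l1 u + l1 v := by
  rw [l1, l1, l1, ← Finset.sum_add_distrib]
  exact Finset.sum_le_sum fun i _ => Int.natAbs_add_le _ _

lemma l1_sub_le (u v : Fin n → ℤ) : l1 (u - v) ≤ l1 u + l1 v := by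
  simpa [sub_eq_add_neg] using l1_add_le u (-v)

lemma apply_le_l1 (u : Fin n → ℤ) (i : Fin n) : u i ≤ l1 u := by
  have : (u i).natAbs ≤ l1 u :=
    Finset.single_le_sum (f := fun j => (u j).natAbs) (fun _ _ => Nat.zero_le _)
      (Finset.mem_univ i)
  omega

@[simp] lemma l1_e (i : Fin n) : l1 (e n i) = 1 := by
  simp [l1, e, apply_ite]

lemma grid_adj_iff {u v : Fin n → ℤ} : (grid n).Adj u v ↔ l1 (u - v) = 1 := by
  change ∑ i, |u i - v i| = 1 ↔ _
  rw [l1, ← Nat.cast_inj (R := ℤ)]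
  simp

def dir (p : Fin n × Bool) : Fin n → ℤ := if p.2 then e n p.1 else -e n p.1

@[simp] lemma l1_dir (p : Fin n × Bool) : l1 (dir p) = 1 := by
  unfold dir; split_ifs <;> simp

lemma exists_l1_sub_dir {σ : Fin n → ℤ} (hσ : σ ≠ 0) :
    ∃ p, l1 (σ - dir p) + 1 = l1 σ := by
  obtain ⟨j, hj⟩ : ∃ j, σ j ≠ 0 := by simpa [funext_iff] using hσ
  refine ⟨(j, decide (0 < σ j)), ?_⟩
  have hcoord : ∀ k, ((σ - dir (j, decide (0 < σ j))) k).natAbs + (if k = j then 1 else 0)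
      = (σ k).natAbs := by
    intro k
    by_cases hk : k = j
    · subst hk
      by_cases hpos : 0 < σ k <;>
        simp only [dir, e, hpos, decide_true, decide_false, Bool.false_eq_true, ↓reduceIte,
          Pi.sub_apply, Pi.neg_apply, sub_neg_eq_add] <;> omega
    · by_cases hpos : 0 < σ j <;> simp [dir, e, hk, hpos]
  simp only [l1, ← hcoord, Finset.sum_add_distrib, Finset.sum_ite_eq', Finset.mem_univ, if_true]

lemma l1_induction {P : (Fin n → ℤ) → Prop} (zero : P 0)
    (step : ∀ σ p, l1 (σ + dir p) = l1 σ + 1 → P σ → P (σ + dir p)) :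
    ∀ σ, P σ := by
  intro σ
  induction hN : l1 σ generalizing σ with
  | zero => rwa [l1_eq_zero.mp hN]
  | succ N ih =>
    obtain ⟨p, hp⟩ := exists_l1_sub_dir (σ := σ) (by rintro rfl; simp at hN)
    simpa using step (σ - dir p) p (by rw [sub_add_cancel]; omega) (ih _ (by omega))

lemma exists_grid_walk (u σ : Fin n → ℤ) :
    ∃ q : (grid n).Walk u (u + σ), q.length = l1 σ := by
  induction σ using l1_induction with
  | zero => exact ⟨SimpleGraph.Walk.nil.copy rfl (add_zero u).symm, by simp⟩
  | step σ p hp ih =>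
    obtain ⟨q, hq⟩ := ih
    have hadj : (grid n).Adj (u + σ) (u + (σ + dir p)) := by simp [grid_adj_iff, ← sub_sub]
    exact ⟨q.concat hadj, by simp [hq, hp]⟩

lemma l1_sub_le_length {u v : Fin n → ℤ} (q : (grid n).Walk u v) : l1 (v - u) ≤ q.length := by
  induction q with
  | nil => simp
  | @cons a b c hab q ih =>
    have h1 : l1 (b - a) = 1 := by rw [← l1_neg, neg_sub]; exact grid_adj_iff.mp hab
    calc l1 (c - a) = l1 ((c - b) + (b - a)) := by rw [sub_add_sub_cancel]
      _ ≤ l1 (c - b) + l1 (b - a) := l1_add_le _ _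
      _ ≤ (q.cons hab).length := by simp [h1, ih]

lemma grid_dist_add (u σ : Fin n → ℤ) : (grid n).dist u (u + σ) = l1 σ := by
  obtain ⟨q, hq⟩ := exists_grid_walk u σ
  refine le_antisymm (hq ▸ SimpleGraph.dist_le q) ?_
  obtain ⟨q', hq'⟩ := SimpleGraph.Reachable.exists_walk_length_eq_dist ⟨q⟩
  simpa [hq'] using l1_sub_le_length q'

end Grid

section Torus

variable {n : ℕ} {T : TorusData n}

lemma tmk_add (u v : Fin n → ℤ) : tmk T (u + v) = tmk T u + tmk T v := rfl

lemma tmk_neg (u : Fin n → ℤ) : tmk T (-u) = -tmk T u := rfl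

lemma tmk_surjective : Function.Surjective (tmk T) := QuotientAddGroup.mk_surjective

lemma torus_dist_tmk_add (hd : DistCond T) (u : Fin n → ℤ) {σ : Fin n → ℤ}
    (hσ : l1 σ ≤ 4) : (torusG T).dist (tmk T u) (tmk T (u + σ)) = l1 σ := by
  obtain ⟨q, -⟩ := exists_grid_walk u σ
  obtain ⟨x, hux, hxv⟩ :=
    exists_dist_le_of_dist_le_add (m := 2) (k := 2) ⟨q⟩ (by rw [grid_dist_add]; omega)
  rw [← grid_dist_add u σ]
  exact (hd x u (u + σ) (SimpleGraph.dist_comm ▸ hux) hxv).symm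

lemma eq_zero_of_mem_lat (hd : DistCond T) {v : Fin n → ℤ} (hv : v ∈ T.lat)
    (h4 : l1 v ≤ 4) : v = 0 := by
  have h0 : tmk T (0 + v) = tmk T 0 := QuotientAddGroup.eq_iff_sub_mem.mpr (by simpa using hv)
  have := torus_dist_tmk_add hd 0 h4
  rw [h0, SimpleGraph.dist_self] at this
  exact l1_eq_zero.mp this.symm

instance (T : TorusData n) : Finite (TorusV T) := by
  have hq : T.q ≠ 0 := Nat.mul_ne_zero T.hk.ne' (Int.natAbs_ne_zero.mpr T.hdet)
  have : NeZero T.q := ⟨hq⟩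
  refine Finite.of_surjective (fun c : Fin n → ZMod T.q => tmk T fun j => ((c j).val : ℤ)) ?_
  intro b
  obtain ⟨z, rfl⟩ := tmk_surjective b
  refine ⟨fun j => (z j : ZMod T.q), QuotientAddGroup.eq_iff_sub_mem.mpr fun j => ?_⟩
  change (T.q : ℤ) ∣ ∑ k, T.A j k * _
  refine Finset.dvd_sum fun k _ => Dvd.dvd.mul_left ?_ _
  rw [← ZMod.intCast_zmod_eq_zero_iff_dvd]
  simp

def nbr (a : TorusV T) (p : Fin n × Bool) : TorusV T := a + tmk T (dir p)

@[simp] lemma nbr_true (a : TorusV T) (i : Fin n) : nbr a (i, true) = a + tmk T (e n i) := rfl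

@[simp] lemma nbr_false (a : TorusV T) (i : Fin n) : nbr a (i, false) = a - tmk T (e n i) := by
  simp [nbr, dir, tmk_neg, sub_eq_add_neg]

lemma nbr_tmk (u : Fin n → ℤ) (p : Fin n × Bool) : nbr (tmk T u) p = tmk T (u + dir p) := rfl

lemma adj_nbr (hd : DistCond T) (a : TorusV T) (p : Fin n × Bool) :
    (torusG T).Adj a (nbr a p) := by
  refine ⟨fun h => ?_, p.1, ?_⟩
  · have hp : dir p ∈ T.lat := (QuotientAddGroup.eq_zero_iff _).mp (left_eq_add.mp h)
    simpa using congrArg l1 (eq_zero_of_mem_lat hd hp (by simp))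
  · rcases p with ⟨i, _ | _⟩
    · right; simp
    · left; simp

lemma nbr_injective (hd : DistCond T) (a : TorusV T) : Function.Injective (nbr a) := by
  intro p p' h
  have hmem : dir p - dir p' ∈ T.lat :=
    QuotientAddGroup.eq_iff_sub_mem.mp (add_left_cancel (a := a) h)
  have hdir := sub_eq_zero.mp (eq_zero_of_mem_lat hd hmem ((l1_sub_le _ _).trans (by simp)))
  rcases p with ⟨i, b⟩
  rcases p' with ⟨i', b'⟩
  have hcoord := congrFun hdir i
  by_cases hi : i = i'
  · subst hi
    cases b <;> cases b' <;> simp [dir, e] at hcoord ⊢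
  · cases b <;> cases b' <;> simp [dir, e, hi] at hcoord

lemma adj_iff_exists_nbr (hd : DistCond T) {a b : TorusV T} :
    (torusG T).Adj a b ↔ ∃ p, nbr a p = b := by
  refine ⟨fun ⟨_, i, h⟩ => ?_, fun ⟨p, hp⟩ => hp ▸ adj_nbr hd a p⟩
  rcases h with h | h
  · exact ⟨(i, true), by rw [nbr_true, ← h, add_sub_cancel]⟩
  · exact ⟨(i, false), by rw [nbr_false, ← h, sub_sub_cancel]⟩

lemma finsum_adj (hd : DistCond T) {M : Type*} [AddCommMonoid M] (a : TorusV T)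
    (φ : TorusV T → M) :
    ∑ᶠ b ∈ {b | (torusG T).Adj a b}, φ b =
      ∑ i, (φ (a + tmk T (e n i)) + φ (a - tmk T (e n i))) := by
  have hset : {b | (torusG T).Adj a b} = Set.range (nbr a) := by
    ext b; simp [adj_iff_exists_nbr hd]
  rw [hset, finsum_mem_range (nbr_injective hd a), finsum_eq_sum_of_fintype,
    Fintype.sum_prod_type]
  simp

lemma torus_connected (hd : DistCond T) : (torusG T).Connected := by
  have : Nonempty (TorusV T) := ⟨tmk T 0⟩
  refine ⟨fun a b => ?_⟩
  obtain ⟨u, rfl⟩ := tmk_surjective a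
  obtain ⟨v, rfl⟩ := tmk_surjective b
  suffices ∀ σ, (torusG T).Reachable (tmk T u) (tmk T (u + σ)) by simpa using this (v - u)
  intro σ
  induction σ using l1_induction with
  | zero => simp
  | step σ p _ ih =>
    rw [← add_assoc, ← nbr_tmk]
    exact ih.trans (adj_nbr hd _ p).reachable

end Torus

section TestFunction

variable {n : ℕ} {T : TorusData n}

def ball2 (n : ℕ) : Finset (Fin n → ℤ) := (Finset.Icc (-2) 2).filter (l1 · ≤ 2)

lemma mem_ball2 {σ : Fin n → ℤ} : σ ∈ ball2 n ↔ l1 σ ≤ 2 := by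
  refine ⟨fun h => (Finset.mem_filter.mp h).2, fun h => Finset.mem_filter.mpr ⟨?_, h⟩⟩
  refine Finset.mem_Icc.mpr ⟨fun k => ?_, fun k => ?_⟩ <;>
    simp only [Pi.neg_apply, Pi.ofNat_apply] <;>
    linarith [apply_le_l1 σ k, apply_le_l1 (-σ) k, l1_neg σ, Pi.neg_apply σ k]

def coordFun (T : TorusData n) (x : Fin n → ℤ) (i : Fin n) : TorusV T → ℤ :=
  mcShane (torusG T) (ball2 n) ⟨0, mem_ball2.mpr (by simp)⟩ (fun σ => tmk T (x + σ)) (· i)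

lemma lip1_coordFun (hd : DistCond T) (x : Fin n → ℤ) (i : Fin n) :
    Lip1 (torusG T) (coordFun T x i) :=
  lip1_mcShane (torus_connected hd)

lemma coordFun_tmk (hd : DistCond T) (x : Fin n → ℤ) (i : Fin n) {σ : Fin n → ℤ}
    (hσ : l1 σ ≤ 2) : coordFun T x i (tmk T (x + σ)) = σ i := by
  refine mcShane_apply_of_mem (mem_ball2.mpr hσ) fun τ hτ => ?_
  have hτ := mem_ball2.mp hτ
  rw [show x + τ = x + σ + (τ - σ) by abel,
    torus_dist_tmk_add hd _ (by linarith [l1_sub_le τ σ])]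
  simpa using apply_le_l1 (τ - σ) i

def coordLap (T : TorusData n) (w : TorusV T → TorusV T → ℝ) (i : Fin n) (a : TorusV T) :
    ℝ :=
  w a (a + tmk T (e n i)) - w a (a - tmk T (e n i))

lemma lap_coordFun (hd : DistCond T) (w : TorusV T → TorusV T → ℝ) (x : Fin n → ℤ)
    (i : Fin n) {σ : Fin n → ℤ} (hσ : l1 σ ≤ 1) :
    lap (torusG T) w (coordFun T x i) (tmk T (x + σ)) = coordLap T w i (tmk T (x + σ)) := by
  set a := tmk T (x + σ)
  have hstep : ∀ j, l1 (σ + e n j) ≤ 2 ∧ l1 (σ + -e n j) ≤ 2 := fun j =>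
    ⟨(l1_add_le _ _).trans (by rw [l1_e]; omega),
      (l1_add_le _ _).trans (by rw [l1_neg, l1_e]; omega)⟩
  have hcenter : coordFun T x i a = σ i := coordFun_tmk hd x i (by omega)
  have hplus : ∀ j, coordFun T x i (a + tmk T (e n j)) = σ i + e n j i := fun j => by
    rw [← tmk_add, add_assoc, coordFun_tmk hd x i (hstep j).1, Pi.add_apply]
  have hminus : ∀ j, coordFun T x i (a - tmk T (e n j)) = σ i - e n j i := fun j => by
    rw [sub_eq_add_neg, ← tmk_neg, ← tmk_add, add_assoc, coordFun_tmk hd x i (hstep j).2]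
    simp [sub_eq_add_neg]
  rw [lap, finsum_adj hd]
  simp only [hcenter, hplus, hminus]
  simp [e, coordLap, sub_eq_add_neg, Finset.sum_add_distrib]

end TestFunction

section Curvature

variable {n : ℕ} {T : TorusData n}

lemma kappa_add_add_kappa_sub_le (hd : DistCond T) (w : TorusV T → TorusV T → ℝ)
    (a : TorusV T) (i : Fin n) :
    kappa (torusG T) w a (a + tmk T (e n i)) + kappa (torusG T) w a (a - tmk T (e n i)) ≤
      coordLap T w i (a - tmk T (e n i)) - coordLap T w i (a + tmk T (e n i)) := by
  obtain ⟨x, rfl⟩ := tmk_surjective a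
  have hf0 : coordFun T x i (tmk T x) = 0 := by
    simpa using coordFun_tmk hd x i (σ := 0) (by simp)
  have hf1 : coordFun T x i (tmk T (x + e n i)) = 1 := by
    simpa [e] using coordFun_tmk hd x i (σ := e n i) (by simp)
  have hf2 : coordFun T x i (tmk T (x + -e n i)) = -1 := by
    simpa [e] using coordFun_tmk hd x i (σ := -e n i) (by simp)
  have hlap0 : lap (torusG T) w (coordFun T x i) (tmk T x) = coordLap T w i (tmk T x) := by
    simpa using lap_coordFun hd w x i (σ := 0) (by simp)
  have hlap1 := lap_coordFun hd w x i (σ := e n i) (by simp)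
  have hlap2 := lap_coordFun hd w x i (σ := -e n i) (by simp)
  have hκ₁ := kappa_le_lap_sub_lap w (lip1_coordFun hd x i) (x := tmk T x)
    (y := tmk T (x + e n i)) (by rw [hf0, hf1]; rfl)
  have hκ₂ := kappa_le_lap_sub_lap w (lip1_coordFun hd x i).neg (x := tmk T x)
    (y := tmk T (x + -e n i)) (by simp only [Pi.neg_apply]; rw [hf0, hf2]; rfl)
  rw [lap_neg, lap_neg] at hκ₂
  rw [sub_eq_add_neg, ← tmk_neg, ← tmk_add, ← tmk_add]
  linarith

lemma scal_le_sum_coordLap (hd : DistCond T) (w : TorusV T → TorusV T → ℝ) (a : TorusV T) :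
    scal (torusG T) w a ≤
      ∑ i, (coordLap T w i (a - tmk T (e n i)) - coordLap T w i (a + tmk T (e n i))) := by
  rw [scal, finsum_adj hd]
  exact Finset.sum_le_sum fun i _ => kappa_add_add_kappa_sub_le hd w a i

end Curvature

theorem torus_total_curvature_nonpos_general (n : ℕ) (T : TorusData n)
    (wT : TorusV T → TorusV T → ℝ)
    (hdist : DistCond T) :
    ∑ᶠ a : TorusV T, scal (torusG T) wT a ≤ 0 := by
  have := Fintype.ofFinite (TorusV T)
  rw [finsum_eq_sum_of_fintype]
  calc ∑ a, scal (torusG T) wT a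
      ≤ ∑ a, ∑ i,
          (coordLap T wT i (a - tmk T (e n i)) - coordLap T wT i (a + tmk T (e n i))) :=
        Finset.sum_le_sum fun a _ => scal_le_sum_coordLap hdist wT a
    _ = 0 := by
      rw [Finset.sum_comm]
      refine Finset.sum_eq_zero fun i _ => ?_
      set t := tmk T (e n i)
      rw [Finset.sum_sub_distrib,
        Fintype.sum_equiv (.subRight t) (fun a => coordLap T wT i (a - t)) _ fun _ => rfl,
        Fintype.sum_equiv (.addRight t) (fun a => coordLap T wT i (a + t)) _ fun _ => rfl,
        sub_self]

/-- the total scalar curvature of a discrete weighted torus satisfying the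
distance condition is non-positive. -/
theorem torus_total_curvature_nonpos (n : ℕ) (T : TorusData n)
    (wT : TorusV T → TorusV T → ℝ)
    (hsymm : ∀ a b, wT a b = wT b a)
    (hpos : ∀ a b, (torusG T).Adj a b → 0 < wT a b)
    (hdist : DistCond T) :
    ∑ᶠ a : TorusV T, scal (torusG T) wT a ≤ 0 :=
  torus_total_curvature_nonpos_general n T wT hdist

end PMT
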